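/- Let S be a Clifford semigroup and s a solution on S. Then s is commutative (i.e. (C1) a·c·b = a·b·c and (C2) θ_a = θ_{a·b} hold for all a,b,c ∈ S) if, and only if, S is a commutative semigroup and there exists a semigroup endomorphism γ of S with γ∘γ = γ such that θ_a = γ for every a ∈ S. -/

import Mathlib

/-!
The idempotent `a * a⁻¹` is a central left unit for `a`, so (C1) applied with it in front forces
commutativity. Commutativity and (C2) make `θ` constant, and for a constant `θ = γ` the identities
(P1) and (P2) say exactly that `γ` is an idempotent endomorphism.
-/

section CentralUnit

variable {S : Type*} [Semigroup S]

theorem mul_comm_of_mul_right_comm_of_central_unit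
    (hrc : ∀ a b c : S, a * c * b = a * b * c)
    (hunit : ∀ a : S, ∃ e : S, e * a = a ∧ ∀ x : S, e * x = x * e) (a b : S) :
    a * b = b * a := by
  obtain ⟨e, hea, he⟩ := hunit a
  calc a * b = e * a * b := by rw [hea]
    _ = e * b * a := hrc e b a
    _ = b * e * a := by rw [he]
    _ = b * a := by rw [mul_assoc, hea]

theorem isIdempotentElem_mul_inv {inv : S → S} (hinv : ∀ a : S, a * inv a * a = a) (a : S) :
    IsIdempotentElem (a * inv a) := by
  rw [IsIdempotentElem, ← mul_assoc, hinv]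

end CentralUnit

section ConstantSolution

variable {S : Type*} [Mul S] {θ : S → S → S}

theorem eq_of_forall_eq_mul (hc : ∀ a b : S, a * b = b * a)
    (hθ : ∀ a b : S, θ a = θ (a * b)) (a b : S) : θ a = θ b := by
  rw [hθ a b, hc, ← hθ]

theorem map_mul_of_forall_eq {γ : S → S} (hθ : ∀ a : S, θ a = γ)
    (P1 : ∀ a b c : S, θ a b * θ (a * b) c = θ a (b * c)) (a b : S) :
    γ (a * b) = γ a * γ b := by
  simpa only [hθ] using (P1 a a b).symm

theorem comp_self_of_forall_eq {γ : S → S} (hθ : ∀ a : S, θ a = γ)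
    (P2 : ∀ a b c : S, θ (θ a b) (θ (a * b) c) = θ b c) :
    γ ∘ γ = γ :=
  funext fun a => by simpa only [hθ, Function.comp_apply] using P2 a a a

end ConstantSolution

theorem pentagon_clifford_commutative_iff_general
    {S : Type*} [Semigroup S] (inv : S → S)
    (hinv1 : ∀ a : S, a * inv a * a = a)
    (hcentral : ∀ e : S, e * e = e → ∀ a : S, e * a = a * e)
    (θ : S → S → S)
    (P1 : ∀ a b c : S, θ a b * θ (a * b) c = θ a (b * c))
    (P2 : ∀ a b c : S, θ (θ a b) (θ (a * b) c) = θ b c) :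
    ((∀ a b c : S, a * c * b = a * b * c) ∧ (∀ a b : S, θ a = θ (a * b))) ↔
      ((∀ a b : S, a * b = b * a) ∧
        ∃ γ : S → S, (∀ a b : S, γ (a * b) = γ a * γ b) ∧ γ ∘ γ = γ ∧
          ∀ a : S, θ a = γ) := by
  constructor
  · rintro ⟨hC1, hC2⟩
    have hc : ∀ a b : S, a * b = b * a :=
      mul_comm_of_mul_right_comm_of_central_unit hC1 fun a =>
        ⟨a * inv a, hinv1 a, hcentral _ (isIdempotentElem_mul_inv hinv1 a)⟩
    have hθ : ∀ a : S, θ a = fun x => θ x x := fun a =>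
      funext fun x => by rw [eq_of_forall_eq_mul hc hC2 a x]
    exact ⟨hc, _, map_mul_of_forall_eq hθ P1, comp_self_of_forall_eq hθ P2, hθ⟩
  · rintro ⟨hc, γ, -, -, hθ⟩
    exact ⟨fun a b c => by rw [mul_assoc, mul_assoc, hc c b], fun a b => by rw [hθ, hθ]⟩

theorem pentagon_clifford_commutative_iff
    {S : Type*} [Semigroup S] (inv : S → S)
    (hinv1 : ∀ a : S, a * inv a * a = a)
    (hinv2 : ∀ a : S, inv a * a * inv a = inv a)
    (hinvcomm : ∀ a : S, a * inv a = inv a * a)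
    (hcentral : ∀ e : S, e * e = e → ∀ a : S, e * a = a * e)
    (θ : S → S → S)
    (P1 : ∀ a b c : S, θ a b * θ (a * b) c = θ a (b * c))
    (P2 : ∀ a b c : S, θ (θ a b) (θ (a * b) c) = θ b c) :
    ((∀ a b c : S, a * c * b = a * b * c) ∧ (∀ a b : S, θ a = θ (a * b))) ↔
      ((∀ a b : S, a * b = b * a) ∧
        ∃ γ : S → S, (∀ a b : S, γ (a * b) = γ a * γ b) ∧ γ ∘ γ = γ ∧
          ∀ a : S, θ a = γ) :=
  pentagon_clifford_commutative_iff_general inv hinv1 hcentral θ P1 P2
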